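/- Stability of intrinsically stable networks under specialization: let Λ be the (ℓ+m)×(ℓ+m) matrix M of the single-component specialization construction with all blocks U, Z, Y_1,…,Y_y, W_1,…,W_w having nonnegative entries, and suppose ρ(Λ) < 1 (intrinsic stability). Let Λ̂ = M̂ be its specialization, of size N = ℓ + y·w·m. Let X_1, …, X_N be nonempty closed subsets of ℝ, let 𝒴 = {x ∈ ℝ^N : x_i ∈ X_i for all i}, and let G : ℝ^N → ℝ^N map 𝒴 into itself and satisfy |G_i(x) − G_i(y)| ≤ Σ_{j=1}^N Λ̂_{ij} |x_j − y_j| for all x, y ∈ 𝒴 and all i. Then ρ(Λ̂) < 1 and G is globally stable on 𝒴: there exists x* ∈ 𝒴 with G(x*) = x* such that for every x⁰ ∈ 𝒴 the iterates G^k(x⁰) converge to x*. -/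

import Mathlib

open Matrix

/-- The single-component specialization `M̂` of the block matrix `M = [[U, ΣY_i],[ΣW_j, Z]]`:
indices `B ⊕ (P × C)` with `P = Fin y × Fin w`; its `(B,B)` block is `U`, its
`(B, {(i,j)}×C)` block is `Y i`, its `({(i,j)}×C, B)` block is `W j`, its diagonal
`({(i,j)}×C, {(i,j)}×C)` blocks are `Z`, and all blocks between distinct copies are zero. -/
def specialization {l m y w : ℕ}
    (U : Matrix (Fin l) (Fin l) ℝ) (Z : Matrix (Fin m) (Fin m) ℝ)
    (Y : Fin y → Matrix (Fin l) (Fin m) ℝ) (W : Fin w → Matrix (Fin m) (Fin l) ℝ) :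
    Matrix (Fin l ⊕ ((Fin y × Fin w) × Fin m)) (Fin l ⊕ ((Fin y × Fin w) × Fin m)) ℝ :=
  fun r c =>
    match r, c with
    | Sum.inl a, Sum.inl b => U a b
    | Sum.inl a, Sum.inr ((i, _), c') => Y i a c'
    | Sum.inr ((_, j), r'), Sum.inl b => W j r' b
    | Sum.inr (p, r'), Sum.inr (q, c') => if p = q then Z r' c' else 0

/-- The original block matrix `M = [[U, Y],[W, Z]]` with `Y = ΣY_i`, `W = ΣW_j`. -/
def origMatrix {l m y w : ℕ}
    (U : Matrix (Fin l) (Fin l) ℝ) (Z : Matrix (Fin m) (Fin m) ℝ)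
    (Y : Fin y → Matrix (Fin l) (Fin m) ℝ) (W : Fin w → Matrix (Fin m) (Fin l) ℝ) :
    Matrix (Fin l ⊕ Fin m) (Fin l ⊕ Fin m) ℝ :=
  Matrix.fromBlocks U (∑ i, Y i) (∑ j, W j) Z

/-- The spectral radius of a square real matrix: the maximum of `|λ|` over the complex
roots `λ` of its characteristic polynomial (and `0` if there are none). -/
noncomputable def specRad {n : Type*} [Fintype n] [DecidableEq n]
    (A : Matrix n n ℝ) : ℝ :=
  (((Matrix.charpoly (A.map Complex.ofReal)).roots).map (fun z : ℂ => ‖z‖)).fold max 0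

/-! If `M̂ x = μ x`, then `u = (|x_B|, ∑ⱼ maxᵢ |x_{(i,j),C}|)` is a nonzero nonnegative vector with
`‖μ‖ u ≤ M u`. Since `ρ(M) < 1`, Gelfand's formula gives a positive `v` with `M v < v`, and
comparing `u` with multiples of `v` forces `‖μ‖ < 1`; hence `ρ(M̂) < 1`. A positive `v̂` with
`M̂ v̂ < v̂` then makes `G` a contraction of `∏ X_i` in the weighted sup norm `maxᵢ |xᵢ| / v̂ᵢ`,
and Banach's fixed point theorem applies. -/

open Filter Topology
open scoped NNReal

namespace Multiset

lemma le_fold_max_of_mem {s : Multiset ℝ} {a : ℝ} (h : a ∈ s) : a ≤ s.fold max 0 := by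
  induction s using Multiset.induction_on with
  | empty => simp at h
  | cons b t ih =>
    rw [fold_cons_left]
    rcases mem_cons.mp h with rfl | h
    · exact le_max_left _ _
    · exact (ih h).trans (le_max_right _ _)

lemma fold_max_lt_of_forall_lt {s : Multiset ℝ} {c : ℝ} (h0 : 0 < c) (h : ∀ a ∈ s, a < c) :
    s.fold max 0 < c := by
  induction s using Multiset.induction_on with
  | empty => simpa using h0
  | cons b t ih =>
    rw [fold_cons_left]
    exact max_lt (h b (mem_cons_self _ _)) (ih fun a ha => h a (mem_cons_of_mem ha))

end Multiset

section SpectralRadius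

variable {n : Type*} [Fintype n] [DecidableEq n]

lemma norm_le_specRad {A : Matrix n n ℝ} {μ : ℂ} (hμ : μ ∈ (A.map Complex.ofReal).charpoly.roots) :
    ‖μ‖ ≤ specRad A :=
  Multiset.le_fold_max_of_mem (Multiset.mem_map_of_mem _ hμ)

lemma specRad_lt_of_forall_norm_lt {A : Matrix n n ℝ} {c : ℝ} (hc : 0 < c)
    (h : ∀ μ ∈ (A.map Complex.ofReal).charpoly.roots, ‖μ‖ < c) : specRad A < c :=
  Multiset.fold_max_lt_of_forall_lt hc fun _ ha => by
    obtain ⟨μ, hμ, rfl⟩ := Multiset.mem_map.mp ha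
    exact h μ hμ

lemma Matrix.exists_mulVec_eq_smul_of_mem_roots_charpoly {K : Type*} [Field K] {B : Matrix n n K}
    {μ : K} (hμ : μ ∈ B.charpoly.roots) : ∃ x ≠ 0, B *ᵥ x = μ • x := by
  have hdet : (scalar n μ - B).det = 0 := by
    rw [← eval_charpoly]; exact (Polynomial.mem_roots'.mp hμ).2
  obtain ⟨x, hx0, hx⟩ := exists_mulVec_eq_zero_iff.mpr hdet
  refine ⟨x, hx0, ?_⟩
  rw [sub_mulVec, sub_eq_zero] at hx
  simpa [smul_eq_diagonal_mul] using hx.symm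

lemma spectralRadius_map_ofReal_le_specRad (A : Matrix n n ℝ) :
    spectralRadius ℂ (A.map Complex.ofReal) ≤ ENNReal.ofReal (specRad A) := by
  refine iSup₂_le fun μ hμ => ?_
  have hroot : μ ∈ (A.map Complex.ofReal).charpoly.roots :=
    (Polynomial.mem_roots (charpoly_monic _).ne_zero).mpr (mem_spectrum_iff_isRoot_charpoly.mp hμ)
  rw [← enorm_eq_nnnorm, ← ofReal_norm]
  exact ENNReal.ofReal_le_ofReal (norm_le_specRad hroot)

end SpectralRadius

section Nonnegative

variable {n : Type*} [Fintype n]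

lemma norm_mul_norm_le_mulVec_norm {A : Matrix n n ℝ} (hA : ∀ i j, 0 ≤ A i j) {μ : ℂ}
    {x : n → ℂ} (hx : A.map Complex.ofReal *ᵥ x = μ • x) (i : n) :
    ‖μ‖ * ‖x i‖ ≤ (A *ᵥ fun j => ‖x j‖) i :=
  calc ‖μ‖ * ‖x i‖ = ‖∑ j, (A i j : ℂ) * x j‖ := by
        rw [← norm_mul, ← smul_eq_mul, ← Pi.smul_apply, ← hx]; rfl
    _ ≤ ∑ j, ‖(A i j : ℂ) * x j‖ := norm_sum_le _ _
    _ = (A *ᵥ fun j => ‖x j‖) i := by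
        simp only [mulVec, dotProduct, norm_mul, Complex.norm_real, Real.norm_of_nonneg (hA i _)]

-- Take the least `θ` with `u ≤ θ v`; at a coordinate `i0` where equality holds,
-- `r u ≤ A u ≤ θ A v < θ v = u`.
lemma lt_one_of_mul_le_mulVec {A : Matrix n n ℝ} (hA : ∀ i j, 0 ≤ A i j) {v : n → ℝ}
    (hv : ∀ i, 0 < v i) (hAv : ∀ i, (A *ᵥ v) i < v i) {u : n → ℝ} (hu : ∀ i, 0 ≤ u i)
    (hu0 : u ≠ 0) {r : ℝ} (hru : ∀ i, r * u i ≤ (A *ᵥ u) i) : r < 1 := by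
  obtain ⟨i1, hi1⟩ := Function.ne_iff.mp hu0
  have : Nonempty n := ⟨i1⟩
  obtain ⟨i0, hmax⟩ := Finite.exists_max fun i => u i / v i
  set θ := u i0 / v i0
  have hθ : 0 < θ :=
    (div_pos ((hu i1).lt_of_ne (Ne.symm hi1)) (hv i1)).trans_le (hmax i1)
  have hui0 : u i0 = θ * v i0 := (div_mul_cancel₀ _ (hv i0).ne').symm
  have hle : ∀ j, u j ≤ θ * v j := fun j => (div_le_iff₀ (hv j)).mp (hmax j)
  have hmono : (A *ᵥ u) i0 ≤ θ * (A *ᵥ v) i0 := by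
    simp only [mulVec, dotProduct, Finset.mul_sum]
    exact Finset.sum_le_sum fun j _ => by
      nlinarith [mul_le_mul_of_nonneg_left (hle j) (hA i0 j)]
  have hpos : 0 < u i0 := hui0 ▸ mul_pos hθ (hv i0)
  refine lt_of_mul_lt_mul_right ?_ hpos.le
  calc r * u i0 ≤ θ * (A *ᵥ v) i0 := (hru i0).trans hmono
    _ < θ * v i0 := mul_lt_mul_of_pos_left (hAv i0) hθ
    _ = 1 * u i0 := by rw [one_mul, hui0]

variable [DecidableEq n]

-- Gelfand's formula in the `ℓ∞` operator norm, which is the largest row sum of absolute values.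
lemma exists_pow_sum_apply_lt_one {A : Matrix n n ℝ} (hA : ∀ i j, 0 ≤ A i j)
    (h : specRad A < 1) : ∃ K ≥ 1, ∀ i, ∑ j, (A ^ K) i j < 1 := by
  let _ : NormedRing (Matrix n n ℂ) := Matrix.linftyOpNormedRing
  let _ : NormedAlgebra ℂ (Matrix n n ℂ) := Matrix.linftyOpNormedAlgebra
  have : CompleteSpace (Matrix n n ℂ) := inferInstanceAs (CompleteSpace (n → n → ℂ))
  set B := A.map Complex.ofReal
  have hρB : spectralRadius ℂ B < 1 :=
    (spectralRadius_map_ofReal_le_specRad A).trans_lt (ENNReal.ofReal_lt_one.mpr h)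
  obtain ⟨K, hK, hK1⟩ :=
    (((spectrum.pow_nnnorm_pow_one_div_tendsto_nhds_spectralRadius B).eventually_lt_const
      hρB).and (Filter.eventually_ge_atTop 1)).exists
  have hKpos : (0 : ℝ) < K := by exact_mod_cast hK1
  have hnorm : ‖B ^ K‖₊ < 1 := by
    have := ENNReal.rpow_lt_one hK hKpos
    rwa [← ENNReal.rpow_mul, one_div_mul_cancel hKpos.ne', ENNReal.rpow_one,
      ENNReal.coe_lt_one_iff] at this
  refine ⟨K, hK1, fun i => ?_⟩
  have hrow : ∑ j, ‖(B ^ K) i j‖₊ < 1 :=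
    lt_of_le_of_lt (linfty_opNNNorm_def (B ^ K) ▸
      Finset.le_sup (f := fun i => ∑ j, ‖(B ^ K) i j‖₊) (Finset.mem_univ i)) hnorm
  have hBK : B ^ K = (A ^ K).map Complex.ofReal :=
    (map_pow Complex.ofRealHom.mapMatrix A K).symm
  have hentry : ∀ j, ((‖(B ^ K) i j‖₊ : NNReal) : ℝ) = (A ^ K) i j := fun j => by
    rw [hBK, coe_nnnorm, map_apply, Complex.norm_real, Real.norm_of_nonneg
      (pow_apply_nonneg hA K i j)]
  simpa [← hentry] using (NNReal.coe_lt_coe.mpr hrow)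

lemma exists_pos_mulVec_lt_of_sum_pow_apply_lt_one {A : Matrix n n ℝ} (hA : ∀ i j, 0 ≤ A i j)
    {K : ℕ} (hK : 1 ≤ K) (hrow : ∀ i, ∑ j, (A ^ K) i j < 1) :
    ∃ v : n → ℝ, (∀ i, 0 < v i) ∧ ∀ i, (A *ᵥ v) i < v i := by
  set v : n → ℝ := ∑ k ∈ Finset.range K, (A ^ k) *ᵥ 1
  have hterm : ∀ k i, 0 ≤ ((A ^ k) *ᵥ 1) i := fun k i =>
    Finset.sum_nonneg fun j _ => by simpa using pow_apply_nonneg hA k i j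
  have hv : ∀ i, 1 ≤ v i := fun i => by
    simpa [v, Finset.sum_apply] using
      Finset.single_le_sum (fun k _ => hterm k i) (Finset.mem_range.mpr hK)
  -- telescoping: `A v = v - 1 + A ^ K 1`
  have hAv : A *ᵥ v + 1 = v + (A ^ K) *ᵥ 1 := by
    have h := (Finset.sum_range_succ' (fun k => (A ^ k) *ᵥ (1 : n → ℝ)) K).symm.trans
      (Finset.sum_range_succ _ K)
    simpa only [v, mulVec_sum, mulVec_mulVec, ← pow_succ', pow_zero, one_mulVec] using h
  refine ⟨v, fun i => one_pos.trans_le (hv i), fun i => ?_⟩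
  have hAvi := congrFun hAv i
  have hK1 : ((A ^ K) *ᵥ 1) i < 1 := by simpa [mulVec, dotProduct] using hrow i
  simp only [Pi.add_apply, Pi.one_apply] at hAvi
  linarith

lemma exists_pos_mulVec_lt_of_specRad_lt_one {A : Matrix n n ℝ} (hA : ∀ i j, 0 ≤ A i j)
    (h : specRad A < 1) : ∃ v : n → ℝ, (∀ i, 0 < v i) ∧ ∀ i, (A *ᵥ v) i < v i :=
  let ⟨_, hK, hrow⟩ := exists_pow_sum_apply_lt_one hA h
  exists_pos_mulVec_lt_of_sum_pow_apply_lt_one hA hK hrow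

end Nonnegative

section WeightedContraction

variable {ι : Type*} [Fintype ι]

def GloballyStableOn (G : (ι → ℝ) → ι → ℝ) (X : ι → Set ℝ) : Prop :=
  ∃ xstar, (∀ i, xstar i ∈ X i) ∧ G xstar = xstar ∧
    ∀ x0, (∀ i, x0 i ∈ X i) → Tendsto (fun k => G^[k] x0) atTop (𝓝 xstar)

lemma exists_lt_one_mulVec_le {Λ : Matrix ι ι ℝ} {v : ι → ℝ} (hv : ∀ i, 0 < v i)
    (hΛv : ∀ i, (Λ *ᵥ v) i < v i) : ∃ c : ℝ≥0, c < 1 ∧ ∀ i, (Λ *ᵥ v) i ≤ c * v i := by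
  set f : ι → ℝ≥0 := fun i => ((Λ *ᵥ v) i / v i).toNNReal
  refine ⟨Finset.univ.sup f, (Finset.sup_lt_iff zero_lt_one).mpr fun i _ => ?_, fun i => ?_⟩
  · exact Real.toNNReal_lt_one.mpr ((div_lt_one (hv i)).mpr (hΛv i))
  · rw [← div_le_iff₀ (hv i)]
    exact (Real.le_coe_toNNReal _).trans
      (NNReal.coe_le_coe.mpr (Finset.le_sup (f := f) (Finset.mem_univ i)))

lemma sum_mul_abs_mul_sub_le {Λ : Matrix ι ι ℝ} (hΛ : ∀ i j, 0 ≤ Λ i j) {v : ι → ℝ}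
    (hv : ∀ i, 0 ≤ v i) (z z' : ι → ℝ) (i : ι) :
    ∑ j, Λ i j * |v j * z j - v j * z' j| ≤ (Λ *ᵥ v) i * dist z z' := by
  rw [mulVec, dotProduct, Finset.sum_mul]
  refine Finset.sum_le_sum fun j _ => ?_
  rw [← mul_sub, abs_mul, abs_of_nonneg (hv j), mul_assoc, ← Real.dist_eq]
  exact mul_le_mul_of_nonneg_left (mul_le_mul_of_nonneg_left (dist_le_pi_dist z z' j) (hv j))
    (hΛ i j)

lemma dist_div_le_mul_dist {Λ : Matrix ι ι ℝ} (hΛ : ∀ i j, 0 ≤ Λ i j) {v : ι → ℝ}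
    (hv : ∀ i, 0 < v i) {c : ℝ} (hc : ∀ i, (Λ *ᵥ v) i ≤ c * v i) (hc0 : 0 ≤ c) {a a' : ι → ℝ}
    (z z' : ι → ℝ) (h : ∀ i, |a i - a' i| ≤ ∑ j, Λ i j * |(v * z) j - (v * z') j|) :
    dist (a / v) (a' / v) ≤ c * dist z z' := by
  refine (dist_pi_le_iff (by positivity)).mpr fun i => ?_
  rw [Pi.div_apply, Pi.div_apply, Real.dist_eq, ← sub_div, abs_div, abs_of_pos (hv i),
    div_le_iff₀ (hv i)]
  calc |a i - a' i| ≤ (Λ *ᵥ v) i * dist z z' :=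
        (h i).trans (sum_mul_abs_mul_sub_le hΛ (fun j => (hv j).le) z z' i)
    _ ≤ c * v i * dist z z' := by gcongr; exact hc i
    _ = c * dist z z' * v i := by ring

theorem globallyStableOn_of_mulVec_lt {Λ : Matrix ι ι ℝ} (hΛ : ∀ i j, 0 ≤ Λ i j) {v : ι → ℝ}
    (hv : ∀ i, 0 < v i) (hΛv : ∀ i, (Λ *ᵥ v) i < v i) {X : ι → Set ℝ}
    (hXne : ∀ i, (X i).Nonempty) (hXcl : ∀ i, IsClosed (X i)) {G : (ι → ℝ) → ι → ℝ}
    (hG : ∀ x, (∀ i, x i ∈ X i) → ∀ i, G x i ∈ X i)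
    (hLip : ∀ x x', (∀ i, x i ∈ X i) → (∀ i, x' i ∈ X i) →
      ∀ i, |G x i - G x' i| ≤ ∑ j, Λ i j * |x j - x' j|) :
    GloballyStableOn G X := by
  obtain ⟨c, hc1, hc⟩ := exists_lt_one_mulVec_le hv hΛv
  have hv0 : ∀ i, v i ≠ 0 := fun i => (hv i).ne'
  set s : Set (ι → ℝ) := (v * ·) ⁻¹' {x | ∀ i, x i ∈ X i}
  have hdiv : ∀ x, v * (x / v) = x := fun x => funext fun i => mul_div_cancel₀ _ (hv0 i)
  let F : (ι → ℝ) → ι → ℝ := fun z => G (v * z) / v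
  have hconj : Function.Semiconj (v * ·) F G := fun z => hdiv (G (v * z))
  have hmaps : Set.MapsTo F s s := fun z hz => by
    rw [Set.mem_preimage, show v * F z = G (v * z) from hconj z]
    exact hG _ hz
  have hlip : ∀ z ∈ s, ∀ z' ∈ s, dist (F z) (F z') ≤ c * dist z z' := fun z hz z' hz' =>
    dist_div_le_mul_dist hΛ hv hc c.2 z z' (hLip _ _ hz hz')
  have hs : IsClosed s := by
    simp only [s, Set.ofPred_forall, Set.preimage_iInter]
    exact isClosed_iInter fun i => (hXcl i).preimage (by fun_prop)
  have : CompleteSpace s := hs.completeSpace_coe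
  have : Nonempty s := ⟨⟨(fun i => (hXne i).some) / v, by
    rw [Set.mem_preimage, hdiv]; exact fun i => (hXne i).some_mem⟩⟩
  have hF : ContractingWith c (hmaps.restrict F s s) :=
    ⟨hc1, LipschitzWith.of_dist_le_mul fun a b => hlip a.1 a.2 b.1 b.2⟩
  set p := ContractingWith.fixedPoint _ hF
  refine ⟨v * p, p.2, ?_, fun x0 hx0 => ?_⟩
  · rw [← hconj]
    exact congrArg (v * ·) (congrArg Subtype.val hF.fixedPoint_isFixedPt)
  · have hz0 : x0 / v ∈ s := by rwa [Set.mem_preimage, hdiv]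
    have hiter : ∀ k, v * ((hmaps.restrict F s s)^[k] ⟨_, hz0⟩ : ι → ℝ) = G^[k] x0 := fun k => by
      rw [Set.MapsTo.iterate_restrict, Set.MapsTo.val_restrict_apply, (hconj.iterate_right k).eq,
        hdiv]
    exact (((continuous_const.mul continuous_subtype_val).tendsto p).comp
      (hF.tendsto_iterate_fixedPoint _)).congr hiter

end WeightedContraction

section Specialization

variable {l m y w : ℕ} (U : Matrix (Fin l) (Fin l) ℝ) (Z : Matrix (Fin m) (Fin m) ℝ)
  (Y : Fin y → Matrix (Fin l) (Fin m) ℝ) (W : Fin w → Matrix (Fin m) (Fin l) ℝ)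

lemma specialization_mulVec_inl (t : Fin l ⊕ ((Fin y × Fin w) × Fin m) → ℝ) (a : Fin l) :
    (specialization U Z Y W *ᵥ t) (Sum.inl a) =
      ∑ b, U a b * t (Sum.inl b) + ∑ p : Fin y × Fin w, ∑ c, Y p.1 a c * t (Sum.inr (p, c)) := by
  simp [mulVec, dotProduct, Fintype.sum_sum_type, Fintype.sum_prod_type, specialization]

lemma specialization_mulVec_inr (t : Fin l ⊕ ((Fin y × Fin w) × Fin m) → ℝ)
    (p : Fin y × Fin w) (c : Fin m) :
    (specialization U Z Y W *ᵥ t) (Sum.inr (p, c)) =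
      ∑ b, W p.2 c b * t (Sum.inl b) + ∑ c', Z c c' * t (Sum.inr (p, c')) := by
  simp [mulVec, dotProduct, Fintype.sum_sum_type, Fintype.sum_prod_type, specialization,
    ite_mul, Finset.sum_ite_eq]

lemma origMatrix_mulVec_inl (u : Fin l ⊕ Fin m → ℝ) (a : Fin l) :
    (origMatrix U Z Y W *ᵥ u) (Sum.inl a) =
      ∑ b, U a b * u (Sum.inl b) + ∑ c, (∑ i, Y i a c) * u (Sum.inr c) := by
  simp [mulVec, dotProduct, Fintype.sum_sum_type, origMatrix, Matrix.sum_apply]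

lemma origMatrix_mulVec_inr (u : Fin l ⊕ Fin m → ℝ) (c : Fin m) :
    (origMatrix U Z Y W *ᵥ u) (Sum.inr c) =
      ∑ b, (∑ j, W j c b) * u (Sum.inl b) + ∑ c', Z c c' * u (Sum.inr c') := by
  simp [mulVec, dotProduct, Fintype.sum_sum_type, origMatrix, Matrix.sum_apply]

variable {U Z Y W}

lemma origMatrix_nonneg (hU : ∀ a b, 0 ≤ U a b) (hZ : ∀ a b, 0 ≤ Z a b)
    (hY : ∀ i a b, 0 ≤ Y i a b) (hW : ∀ j a b, 0 ≤ W j a b) :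
    ∀ k k', 0 ≤ origMatrix U Z Y W k k' := by
  rintro (a | c) (b | d) <;> simp only [origMatrix, fromBlocks_apply₁₁, fromBlocks_apply₁₂,
    fromBlocks_apply₂₁, fromBlocks_apply₂₂, Matrix.sum_apply]
  · exact hU a b
  · exact Finset.sum_nonneg fun i _ => hY i a d
  · exact Finset.sum_nonneg fun j _ => hW j c b
  · exact hZ c d

lemma specialization_nonneg (hU : ∀ a b, 0 ≤ U a b) (hZ : ∀ a b, 0 ≤ Z a b)
    (hY : ∀ i a b, 0 ≤ Y i a b) (hW : ∀ j a b, 0 ≤ W j a b) :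
    ∀ k k', 0 ≤ specialization U Z Y W k k' := by
  rintro (a | ⟨⟨i, j⟩, c⟩) (b | ⟨⟨i', j'⟩, c'⟩) <;> simp only [specialization]
  · exact hU a b
  · exact hY i' a c'
  · exact hW j c b
  · split_ifs
    exacts [hZ c c', le_rfl]

-- The copies `((i, j), c)` sharing `j` all receive the same block `W j`, so only their maximum
-- is kept; different `j` add up, as in `W = ∑ j, W j`.
noncomputable def foldCopies (t : Fin l ⊕ ((Fin y × Fin w) × Fin m) → ℝ) : Fin l ⊕ Fin m → ℝ :=
  Sum.elim (fun a => t (Sum.inl a)) fun c => ∑ j, ⨆ i, t (Sum.inr ((i, j), c))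

lemma le_iSup_foldCopies (t : Fin l ⊕ ((Fin y × Fin w) × Fin m) → ℝ) (p : Fin y × Fin w)
    (c : Fin m) : t (Sum.inr (p, c)) ≤ ⨆ i, t (Sum.inr ((i, p.2), c)) :=
  le_ciSup (f := fun i => t (Sum.inr ((i, p.2), c))) (Finite.bddAbove_range _) p.1

lemma foldCopies_nonneg {t : Fin l ⊕ ((Fin y × Fin w) × Fin m) → ℝ} (ht : ∀ k, 0 ≤ t k)
    (k : Fin l ⊕ Fin m) : 0 ≤ foldCopies t k := by
  rcases k with a | c <;> simp only [foldCopies, Sum.elim_inl, Sum.elim_inr]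
  · exact ht _
  · exact Finset.sum_nonneg fun j _ => Real.iSup_nonneg fun i => ht _

lemma foldCopies_ne_zero {t : Fin l ⊕ ((Fin y × Fin w) × Fin m) → ℝ} (ht : ∀ k, 0 ≤ t k)
    (ht0 : t ≠ 0) : foldCopies t ≠ 0 := by
  obtain ⟨k, hk⟩ := Function.ne_iff.mp ht0
  rcases k with a | ⟨p, c⟩
  · exact Function.ne_iff.mpr ⟨Sum.inl a, hk⟩
  · have hpos : 0 < t (Sum.inr (p, c)) := (ht _).lt_of_ne (Ne.symm hk)
    refine Function.ne_iff.mpr ⟨Sum.inr c, (hpos.trans_le ?_).ne'⟩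
    exact (le_iSup_foldCopies t p c).trans <| Finset.single_le_sum
      (f := fun j => ⨆ i, t (Sum.inr ((i, j), c)))
      (fun j _ => Real.iSup_nonneg fun i => ht _) (Finset.mem_univ p.2)

lemma mul_foldCopies_inl_le (hY : ∀ i a b, 0 ≤ Y i a b)
    {t : Fin l ⊕ ((Fin y × Fin w) × Fin m) → ℝ} {r : ℝ}
    (hr : ∀ k, r * t k ≤ (specialization U Z Y W *ᵥ t) k) (a : Fin l) :
    r * foldCopies t (Sum.inl a) ≤ (origMatrix U Z Y W *ᵥ foldCopies t) (Sum.inl a) := by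
  have hsum : ∑ p : Fin y × Fin w, ∑ c, Y p.1 a c * t (Sum.inr (p, c)) ≤
      ∑ c, (∑ i, Y i a c) * ∑ j, ⨆ i, t (Sum.inr ((i, j), c)) := by
    simp only [Finset.sum_mul_sum, Finset.sum_comm (γ := Fin m), ← Fintype.sum_prod_type']
    exact Finset.sum_le_sum fun q _ =>
      mul_le_mul_of_nonneg_left (le_iSup_foldCopies t q.1 q.2) (hY _ _ _)
  simpa [foldCopies, origMatrix_mulVec_inl, specialization_mulVec_inl] using
    (hr (Sum.inl a)).trans (by rw [specialization_mulVec_inl]; gcongr)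

lemma mul_foldCopies_inr_le [Nonempty (Fin y)] (hZ : ∀ a b, 0 ≤ Z a b)
    {t : Fin l ⊕ ((Fin y × Fin w) × Fin m) → ℝ} {r : ℝ}
    (hr : ∀ k, r * t k ≤ (specialization U Z Y W *ᵥ t) k) (c : Fin m) :
    r * foldCopies t (Sum.inr c) ≤ (origMatrix U Z Y W *ᵥ foldCopies t) (Sum.inr c) := by
  choose i hi using fun j => exists_eq_ciSup_of_finite (f := fun i => t (Sum.inr ((i, j), c)))
  have hrow : ∀ j, r * ⨆ i, t (Sum.inr ((i, j), c)) ≤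
      ∑ b, W j c b * t (Sum.inl b) + ∑ c', Z c c' * ⨆ i, t (Sum.inr ((i, j), c')) := fun j => by
    rw [← hi j]
    refine (hr _).trans ?_
    rw [specialization_mulVec_inr]
    gcongr with c' _
    · exact hZ _ _
    · exact le_iSup_foldCopies t (i j, j) c'
  calc r * foldCopies t (Sum.inr c) = r * ∑ j, ⨆ i, t (Sum.inr ((i, j), c)) := rfl
    _ = ∑ j, r * ⨆ i, t (Sum.inr ((i, j), c)) := Finset.mul_sum ..
    _ ≤ _ := Finset.sum_le_sum fun j _ => hrow j
    _ = (origMatrix U Z Y W *ᵥ foldCopies t) (Sum.inr c) := by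
      simp only [origMatrix_mulVec_inr, foldCopies, Sum.elim_inl, Sum.elim_inr,
        Finset.sum_add_distrib, Finset.sum_mul, Finset.mul_sum]
      rw [Finset.sum_comm, Finset.sum_comm (s := Finset.univ (α := Fin w))]

lemma mul_foldCopies_le [Nonempty (Fin y)] (hZ : ∀ a b, 0 ≤ Z a b) (hY : ∀ i a b, 0 ≤ Y i a b)
    {t : Fin l ⊕ ((Fin y × Fin w) × Fin m) → ℝ} {r : ℝ}
    (hr : ∀ k, r * t k ≤ (specialization U Z Y W *ᵥ t) k) :
    ∀ k, r * foldCopies t k ≤ (origMatrix U Z Y W *ᵥ foldCopies t) k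
  | Sum.inl a => mul_foldCopies_inl_le hY hr a
  | Sum.inr c => mul_foldCopies_inr_le hZ hr c

theorem specRad_specialization_lt_one [Nonempty (Fin y)] (hU : ∀ a b, 0 ≤ U a b)
    (hZ : ∀ a b, 0 ≤ Z a b) (hY : ∀ i a b, 0 ≤ Y i a b) (hW : ∀ j a b, 0 ≤ W j a b)
    (hρ : specRad (origMatrix U Z Y W) < 1) : specRad (specialization U Z Y W) < 1 := by
  have hM := origMatrix_nonneg hU hZ hY hW
  obtain ⟨v, hv, hMv⟩ := exists_pos_mulVec_lt_of_specRad_lt_one hM hρ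
  refine specRad_lt_of_forall_norm_lt one_pos fun μ hμ => ?_
  obtain ⟨x, hx0, hx⟩ := exists_mulVec_eq_smul_of_mem_roots_charpoly hμ
  have ht : ∀ k, 0 ≤ ‖x k‖ := fun k => norm_nonneg _
  have ht0 : (fun k => ‖x k‖) ≠ 0 := fun h => hx0 <| funext fun k => norm_eq_zero.mp (congrFun h k)
  exact lt_one_of_mul_le_mulVec hM hv hMv (foldCopies_nonneg ht) (foldCopies_ne_zero ht ht0)
    (mul_foldCopies_le hZ hY (norm_mul_norm_le_mulVec_norm (specialization_nonneg hU hZ hY hW) hx))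

end Specialization

theorem intrinsic_stability_preserved_by_specialization_general
    {l m y w : ℕ} (hy : 1 ≤ y)
    (U : Matrix (Fin l) (Fin l) ℝ) (Z : Matrix (Fin m) (Fin m) ℝ)
    (Y : Fin y → Matrix (Fin l) (Fin m) ℝ) (W : Fin w → Matrix (Fin m) (Fin l) ℝ)
    (hU : ∀ a b, 0 ≤ U a b) (hZ : ∀ a b, 0 ≤ Z a b)
    (hY : ∀ i a b, 0 ≤ Y i a b) (hW : ∀ j a b, 0 ≤ W j a b)
    (hρ : specRad (origMatrix U Z Y W) < 1)
    (X : (Fin l ⊕ ((Fin y × Fin w) × Fin m)) → Set ℝ)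
    (hXne : ∀ i, (X i).Nonempty) (hXcl : ∀ i, IsClosed (X i))
    (G : ((Fin l ⊕ ((Fin y × Fin w) × Fin m)) → ℝ) → ((Fin l ⊕ ((Fin y × Fin w) × Fin m)) → ℝ))
    (hG : ∀ x, (∀ i, x i ∈ X i) → ∀ i, G x i ∈ X i)
    (hLip : ∀ x y', (∀ i, x i ∈ X i) → (∀ i, y' i ∈ X i) →
      ∀ i, |G x i - G y' i| ≤ ∑ j, specialization U Z Y W i j * |x j - y' j|) :
    specRad (specialization U Z Y W) < 1
    ∧ ∃ xstar, (∀ i, xstar i ∈ X i) ∧ G xstar = xstar ∧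
        ∀ x0, (∀ i, x0 i ∈ X i) →
          Filter.Tendsto (fun k => G^[k] x0) Filter.atTop (nhds xstar) := by
  have : Nonempty (Fin y) := ⟨⟨0, hy⟩⟩
  have hΛ := specialization_nonneg hU hZ hY hW
  have hρ' := specRad_specialization_lt_one hU hZ hY hW hρ
  obtain ⟨v, hv, hΛv⟩ := exists_pos_mulVec_lt_of_specRad_lt_one hΛ hρ'
  exact ⟨hρ', globallyStableOn_of_mulVec_lt hΛ hv hΛv hXne hXcl hG hLip⟩

/-- stability of intrinsically stable networks under specialization.  If the
stability matrix `Λ = M` is nonnegative with `ρ(Λ) < 1`, then its specialization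
`Λ̂ = M̂` also satisfies `ρ(Λ̂) < 1`, and any network map `G` on the specialized index set
whose variation is bounded by `Λ̂` is globally stable. -/
theorem intrinsic_stability_preserved_by_specialization
    {l m y w : ℕ} (hl : 1 ≤ l) (hm : 1 ≤ m) (hy : 1 ≤ y) (hw : 1 ≤ w)
    (U : Matrix (Fin l) (Fin l) ℝ) (Z : Matrix (Fin m) (Fin m) ℝ)
    (Y : Fin y → Matrix (Fin l) (Fin m) ℝ) (W : Fin w → Matrix (Fin m) (Fin l) ℝ)
    (hU : ∀ a b, 0 ≤ U a b) (hZ : ∀ a b, 0 ≤ Z a b)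
    (hY : ∀ i a b, 0 ≤ Y i a b) (hW : ∀ j a b, 0 ≤ W j a b)
    (hρ : specRad (origMatrix U Z Y W) < 1)
    (X : (Fin l ⊕ ((Fin y × Fin w) × Fin m)) → Set ℝ)
    (hXne : ∀ i, (X i).Nonempty) (hXcl : ∀ i, IsClosed (X i))
    (G : ((Fin l ⊕ ((Fin y × Fin w) × Fin m)) → ℝ) → ((Fin l ⊕ ((Fin y × Fin w) × Fin m)) → ℝ))
    (hG : ∀ x, (∀ i, x i ∈ X i) → ∀ i, G x i ∈ X i)
    (hLip : ∀ x y', (∀ i, x i ∈ X i) → (∀ i, y' i ∈ X i) →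
      ∀ i, |G x i - G y' i| ≤ ∑ j, specialization U Z Y W i j * |x j - y' j|) :
    specRad (specialization U Z Y W) < 1
    ∧ ∃ xstar, (∀ i, xstar i ∈ X i) ∧ G xstar = xstar ∧
        ∀ x0, (∀ i, x0 i ∈ X i) →
          Filter.Tendsto (fun k => G^[k] x0) Filter.atTop (nhds xstar) :=
  intrinsic_stability_preserved_by_specialization_general hy U Z Y W hU hZ hY hW hρ X hXne hXcl G hG
    hLip
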